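/- arXiv:1301.7050 — 2 statements merged into one kernel-verified Lean document; each statement's English description precedes it below -/
import Mathlib

section
/- A right R-module N is M-𝒜-flat if and only if its character module N⁺ is an M-𝒜-injective left R-module. -/
/-!
`N ⊗_R -` and `Hom_R(-, N⁺)` are linked by the adjunction isomorphism
`Hom_R(X, N⁺) ≃ (N ⊗_R X)⁺`, natural in `X`. Under it, restriction along `A ⊆ M` becomes the
dual of `N ⊗ A → N ⊗ M`, and since `ℚ/ℤ` is an injective cogenerator of abelian groups,
a homomorphism of abelian groups is injective iff its dual is surjective.
-/

open TensorProduct MulOpposite CategoryTheory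

universe u

section NC

variable (R : Type u) [Ring R]

/-- The defining relations of the tensor product `N ⊗[R] X` of a right `R`-module `N`
and a left `R`-module `X` over a (possibly noncommutative) ring `R`, inside `N ⊗[ℤ] X`. -/
def ncRel (N : Type u) [AddCommGroup N] [Module Rᵐᵒᵖ N]
    (X : Type u) [AddCommGroup X] [Module R X] : Submodule ℤ (N ⊗[ℤ] X) :=
  Submodule.span ℤ {z | ∃ (r : R) (n : N) (x : X), z = (op r • n) ⊗ₜ[ℤ] x - n ⊗ₜ[ℤ] (r • x)}

/-- The tensor product `N ⊗[R] X` of a right `R`-module `N` and a left `R`-module `X`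
over a (possibly noncommutative) ring `R`. -/
abbrev NCTensor (N : Type u) [AddCommGroup N] [Module Rᵐᵒᵖ N]
    (X : Type u) [AddCommGroup X] [Module R X] : Type u :=
  (N ⊗[ℤ] X) ⧸ ncRel R N X

/-- Functoriality of the tensor product in the left (right-module) variable. -/
noncomputable def ncMapL {N N' : Type u} [AddCommGroup N] [Module Rᵐᵒᵖ N]
    [AddCommGroup N'] [Module Rᵐᵒᵖ N'] (g : N →ₗ[Rᵐᵒᵖ] N')
    (X : Type u) [AddCommGroup X] [Module R X] :
    NCTensor R N X →ₗ[ℤ] NCTensor R N' X :=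
  Submodule.mapQ (ncRel R N X) (ncRel R N' X) (LinearMap.rTensor X g.toAddMonoidHom.toIntLinearMap) (by
    rw [ncRel, Submodule.span_le]
    rintro _ ⟨r, n, x, rfl⟩
    show LinearMap.rTensor X g.toAddMonoidHom.toIntLinearMap ((op r • n) ⊗ₜ[ℤ] x - n ⊗ₜ[ℤ] (r • x)) ∈ ncRel R N' X
    simp only [map_sub, LinearMap.rTensor_tmul]
    have h : g.toAddMonoidHom.toIntLinearMap (op r • n) =
        op r • g.toAddMonoidHom.toIntLinearMap n := by
      simp [map_smul]
    rw [h]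
    exact Submodule.subset_span ⟨r, g n, x, rfl⟩)

/-- Functoriality of the tensor product in the right (left-module) variable. -/
noncomputable def ncMap (N : Type u) [AddCommGroup N] [Module Rᵐᵒᵖ N]
    {X Y : Type u} [AddCommGroup X] [Module R X] [AddCommGroup Y] [Module R Y]
    (f : X →ₗ[R] Y) : NCTensor R N X →ₗ[ℤ] NCTensor R N Y :=
  Submodule.mapQ (ncRel R N X) (ncRel R N Y) (LinearMap.lTensor N f.toAddMonoidHom.toIntLinearMap) (by
    rw [ncRel, Submodule.span_le]
    rintro _ ⟨r, n, x, rfl⟩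
    show LinearMap.lTensor N f.toAddMonoidHom.toIntLinearMap ((op r • n) ⊗ₜ[ℤ] x - n ⊗ₜ[ℤ] (r • x)) ∈ ncRel R N Y
    simp only [map_sub, LinearMap.lTensor_tmul]
    have h : f.toAddMonoidHom.toIntLinearMap (r • x) =
        r • f.toAddMonoidHom.toIntLinearMap x := by
      simp [map_smul]
    rw [h]
    exact Submodule.subset_span ⟨r, n, f x, rfl⟩)

lemma ncMap_mk (N : Type u) [AddCommGroup N] [Module Rᵐᵒᵖ N]
    {X Y : Type u} [AddCommGroup X] [Module R X] [AddCommGroup Y] [Module R Y]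
    (f : X →ₗ[R] Y) (w : N ⊗[ℤ] X) :
    ncMap R N f (Submodule.Quotient.mk w) =
      Submodule.Quotient.mk (LinearMap.lTensor N f.toAddMonoidHom.toIntLinearMap w) := by
  unfold ncMap
  exact Submodule.mapQ_apply (p := ncRel R N X) (q := ncRel R N Y) (LinearMap.lTensor N f.toAddMonoidHom.toIntLinearMap) w

section lemmas

variable {R}
variable {X Y Z : Type u} [AddCommGroup X] [Module R X] [AddCommGroup Y] [Module R Y]
  [AddCommGroup Z] [Module R Z]

lemma toInt_id : ((LinearMap.id : X →ₗ[R] X).toAddMonoidHom).toIntLinearMap =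
    (LinearMap.id : X →ₗ[ℤ] X) := rfl

lemma toInt_comp (f : X →ₗ[R] Y) (g : Y →ₗ[R] Z) :
    ((g ∘ₗ f).toAddMonoidHom).toIntLinearMap =
      g.toAddMonoidHom.toIntLinearMap ∘ₗ f.toAddMonoidHom.toIntLinearMap := rfl

lemma toInt_add (f g : X →ₗ[R] Y) :
    ((f + g).toAddMonoidHom).toIntLinearMap =
      f.toAddMonoidHom.toIntLinearMap + g.toAddMonoidHom.toIntLinearMap := rfl

end lemmas

/-- The functor `N ⊗[R] - : R-Mod ⥤ Ab` for a right `R`-module `N`. -/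
noncomputable def ncTensorFunctor (N : Type u) [AddCommGroup N] [Module Rᵐᵒᵖ N] :
    ModuleCat.{u} R ⥤ ModuleCat.{u} ℤ where
  obj X := ModuleCat.of ℤ (NCTensor R N X)
  map {X Y} f := ModuleCat.ofHom (ncMap R N f.hom)
  map_id X := by
    refine ModuleCat.hom_ext (LinearMap.ext fun z => ?_)
    obtain ⟨w, rfl⟩ := Submodule.Quotient.mk_surjective _ z
    show ncMap R N (LinearMap.id : X →ₗ[R] X) _ = _
    rw [ncMap_mk, toInt_id, LinearMap.lTensor_id]
    rfl
  map_comp {X Y Z} f g := by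
    refine ModuleCat.hom_ext (LinearMap.ext fun z => ?_)
    obtain ⟨w, rfl⟩ := Submodule.Quotient.mk_surjective _ z
    show ncMap R N (g.hom ∘ₗ f.hom) (Submodule.Quotient.mk w) = ncMap R N g.hom (ncMap R N f.hom (Submodule.Quotient.mk w))
    rw [ncMap_mk, ncMap_mk, ncMap_mk, toInt_comp, LinearMap.lTensor_comp]
    rfl

instance ncTensorFunctor_additive (N : Type u) [AddCommGroup N] [Module Rᵐᵒᵖ N] :
    (ncTensorFunctor R N).Additive where
  map_add {X Y f g} := by
    refine ModuleCat.hom_ext (LinearMap.ext fun z => ?_)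
    obtain ⟨w, rfl⟩ := Submodule.Quotient.mk_surjective _ z
    show ncMap R N (f.hom + g.hom) (Submodule.Quotient.mk w) = ncMap R N f.hom (Submodule.Quotient.mk w) + ncMap R N g.hom (Submodule.Quotient.mk w)
    rw [ncMap_mk, ncMap_mk, ncMap_mk, toInt_add, LinearMap.lTensor_add]
    rfl

/-- `Tor₁^R(N, Z)` for a right `R`-module `N` and a left `R`-module `Z`, defined as the value at
`Z` of the first left derived functor of the functor `N ⊗[R] -`. -/
noncomputable def ncTor1 (N : Type u) [AddCommGroup N] [Module Rᵐᵒᵖ N]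
    (Z : Type u) [AddCommGroup Z] [Module R Z] : ModuleCat.{u} ℤ :=
  (((ncTensorFunctor R N).leftDerived 1).obj (ModuleCat.of R Z))

/-- `Tor₁^R(N, Z) = 0`. -/
def Tor1IsZero (N : Type u) [AddCommGroup N] [Module Rᵐᵒᵖ N]
    (Z : Type u) [AddCommGroup Z] [Module R Z] : Prop :=
  Limits.IsZero (ncTor1 R N Z)

/-- `Ext¹_R(Z, T) = 0`, where `Ext` is the derived functor of `Hom` on the category
of left `R`-modules. -/
def Ext1IsZero (Z T : Type u) [AddCommGroup Z] [Module R Z] [AddCommGroup T] [Module R T] :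
    Prop :=
  Limits.IsZero ((((Ext ℤ (ModuleCat.{u} R) 1).obj (Opposite.op (ModuleCat.of R Z))).obj
    (ModuleCat.of R T)))

end NC

open MulOpposite


section Char

variable (R : Type u) [Ring R]

/-- The right `R`-module structure on the character module `A⁺ = Hom_ℤ(A, ℚ/ℤ)` of a left
`R`-module `A`, given by `(c • r) (a) = c (r • a)`. -/
instance charModuleRight (A : Type u) [AddCommGroup A] [Module R A] :
    Module Rᵐᵒᵖ (CharacterModule A) where
  smul r c := (c.comp (DistribMulAction.toAddMonoidHom A r.unop) : A →+ _)
  one_smul c := DFunLike.ext _ _ fun a => congrArg c (one_smul R a)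
  mul_smul r s c := DFunLike.ext _ _ fun a => congrArg c (mul_smul s.unop r.unop a)
  smul_zero r := rfl
  smul_add r c c' := rfl
  add_smul r s c := DFunLike.ext _ _ fun a => by
    show c ((r.unop + s.unop) • a) = c (r.unop • a) + c (s.unop • a)
    rw [add_smul, map_add]
  zero_smul c := DFunLike.ext _ _ fun a => by
    show c ((0 : R) • a) = 0
    rw [zero_smul, map_zero]

/-- The left `R`-module structure on the character module `N⁺ = Hom_ℤ(N, ℚ/ℤ)` of a right
`R`-module `N`, given by `(r • c) (n) = c (n • r)`. -/
instance charModuleLeft (N : Type u) [AddCommGroup N] [Module Rᵐᵒᵖ N] :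
    Module R (CharacterModule N) where
  smul r c := (c.comp (DistribMulAction.toAddMonoidHom N (op r)) : N →+ _)
  one_smul c := DFunLike.ext _ _ fun n => congrArg c (one_smul Rᵐᵒᵖ n)
  mul_smul r s c := DFunLike.ext _ _ fun n => congrArg c (mul_smul (op s) (op r) n)
  smul_zero r := rfl
  smul_add r c c' := rfl
  add_smul r s c := DFunLike.ext _ _ fun n => by
    show c ((op r + op s) • n) = c (op r • n) + c (op s • n)
    rw [add_smul, map_add]
  zero_smul c := DFunLike.ext _ _ fun n => by
    show c ((0 : Rᵐᵒᵖ) • n) = 0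
    rw [zero_smul, map_zero]

end Char

section Classes

variable (R : Type u) [Ring R] (M : Type u) [AddCommGroup M] [Module R M]

/-- `T` is `M`-`𝒜`-injective if, for every `A ∈ 𝒜`, every homomorphism `A → T` extends to `M`,
i.e. the restriction map `Hom(M, T) → Hom(A, T)` is surjective. -/
def MAInjective (𝒜 : Set (Submodule R M)) (T : Type u) [AddCommGroup T] [Module R T] : Prop :=
  ∀ A ∈ 𝒜, ∀ f : (↥A) →ₗ[R] T, ∃ g : M →ₗ[R] T, g ∘ₗ A.subtype = f

/-- `T` is strongly `M`-`𝒜`-injective if `Ext¹_R(M/A, T) = 0` for all `A ∈ 𝒜`. -/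
def SMAInjective (𝒜 : Set (Submodule R M)) (T : Type u) [AddCommGroup T] [Module R T] : Prop :=
  ∀ A ∈ 𝒜, Ext1IsZero R (M ⧸ A) T

/-- A right `R`-module `N` is `M`-`𝒜`-flat if `N ⊗ A → N ⊗ M` is injective for all `A ∈ 𝒜`. -/
def MAFlat (𝒜 : Set (Submodule R M)) (N : Type u) [AddCommGroup N] [Module Rᵐᵒᵖ N] : Prop :=
  ∀ A ∈ 𝒜, Function.Injective (ncMap R N A.subtype)

/-- A right `R`-module `N` is strongly `M`-`𝒜`-flat if `Tor₁^R(N, M/A) = 0` for all `A ∈ 𝒜`. -/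
def SMAFlat (𝒜 : Set (Submodule R M)) (N : Type u) [AddCommGroup N] [Module Rᵐᵒᵖ N] : Prop :=
  ∀ A ∈ 𝒜, Tor1IsZero R N (M ⧸ A)

end Classes

section Flat

variable (R : Type u) [Ring R]

/-- A left `R`-module `Z` is flat if tensoring with it preserves injectivity of morphisms of
right `R`-modules. -/
def FlatLeftModule (Z : Type u) [AddCommGroup Z] [Module R Z] : Prop :=
  ∀ (N N' : Type u) [AddCommGroup N] [Module Rᵐᵒᵖ N] [AddCommGroup N'] [Module Rᵐᵒᵖ N']
    (g : N' →ₗ[Rᵐᵒᵖ] N), Function.Injective g → Function.Injective (ncMapL R g Z)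

end Flat

section CharacterTensor

variable {R : Type u} [Ring R] {N : Type u} [AddCommGroup N] [Module Rᵐᵒᵖ N]
  {X Y : Type u} [AddCommGroup X] [Module R X] [AddCommGroup Y] [Module R Y]

lemma NCTensor.mk_smul_tmul (r : R) (n : N) (x : X) :
    (Submodule.Quotient.mk ((op r • n) ⊗ₜ[ℤ] x) : NCTensor R N X) =
      Submodule.Quotient.mk (n ⊗ₜ[ℤ] (r • x)) :=
  (Submodule.Quotient.eq _).mpr (Submodule.subset_span ⟨r, n, x, rfl⟩)

@[ext]
lemma NCTensor.character_ext {c c' : CharacterModule (NCTensor R N X)}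
    (h : ∀ (n : N) (x : X),
      c (Submodule.Quotient.mk (n ⊗ₜ[ℤ] x)) = c' (Submodule.Quotient.mk (n ⊗ₜ[ℤ] x))) :
    c = c' := by
  ext z
  obtain ⟨w, rfl⟩ := Submodule.Quotient.mk_surjective _ z
  induction w using TensorProduct.induction_on with
  | zero => simp only [Submodule.Quotient.mk_zero, map_zero]
  | tmul n x => exact h n x
  | add a b ha hb => rw [Submodule.Quotient.mk_add, map_add, map_add, ha, hb]

/-- The character of `N ⊗_R X` given by `n ⊗ x ↦ φ x n`. -/
noncomputable def homToCharacterTensor (φ : X →ₗ[R] CharacterModule N) :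
    CharacterModule (NCTensor R N X) :=
  (Submodule.liftQ (ncRel R N X)
    (liftAddHom φ.toAddMonoidHom.flip fun z n x => by
      simp).toIntLinearMap
    (by
      rw [ncRel, Submodule.span_le]
      rintro _ ⟨r, n, x, rfl⟩
      simp only [SetLike.mem_coe, LinearMap.mem_ker, AddMonoidHom.coe_toIntLinearMap, map_sub,
        liftAddHom_tmul]
      show φ x (op r • n) - φ (r • x) n = 0
      rw [φ.map_smul]
      exact sub_self _)).toAddMonoidHom

/-- The `R`-linear map `X → N⁺` given by `x ↦ (n ↦ c (n ⊗ x))`. -/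
noncomputable def characterTensorToHom (c : CharacterModule (NCTensor R N X)) :
    X →ₗ[R] CharacterModule N where
  toFun x := c.comp ((ncRel R N X).mkQ.toAddMonoidHom.comp
    ((TensorProduct.mk ℤ N X).flip x).toAddMonoidHom)
  map_add' x y := by
    ext n
    show c (Submodule.Quotient.mk (n ⊗ₜ[ℤ] (x + y))) = _
    rw [tmul_add, Submodule.Quotient.mk_add, map_add]
    rfl
  map_smul' r x := by
    ext n
    show c (Submodule.Quotient.mk (n ⊗ₜ[ℤ] (r • x))) =
      c (Submodule.Quotient.mk ((op r • n) ⊗ₜ[ℤ] x))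
    rw [NCTensor.mk_smul_tmul]

variable (R N X) in
noncomputable def homCharacterEquiv :
    (X →ₗ[R] CharacterModule N) ≃ CharacterModule (NCTensor R N X) where
  toFun := homToCharacterTensor
  invFun := characterTensorToHom
  left_inv _ := rfl
  right_inv _ := NCTensor.character_ext fun _ _ => rfl

lemma dual_ncMap_homCharacterEquiv (f : X →ₗ[R] Y) (ψ : Y →ₗ[R] CharacterModule N) :
    CharacterModule.dual (ncMap R N f) (homCharacterEquiv R N Y ψ) =
      homCharacterEquiv R N X (ψ ∘ₗ f) := by
  ext n x
  show homToCharacterTensor ψ (ncMap R N f (Submodule.Quotient.mk (n ⊗ₜ[ℤ] x))) = _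
  rw [ncMap_mk, LinearMap.lTensor_tmul]
  rfl

theorem ncMap_injective_iff_comp_surjective (f : X →ₗ[R] Y) :
    Function.Injective (ncMap R N f) ↔
      Function.Surjective fun ψ : Y →ₗ[R] CharacterModule N => ψ ∘ₗ f := by
  rw [← CharacterModule.dual_surjective_iff_injective]
  refine ((homCharacterEquiv R N X).forall_congr fun φ =>
    (homCharacterEquiv R N Y).exists_congr fun ψ => ?_).symm
  rw [dual_ncMap_homCharacterEquiv, (homCharacterEquiv R N X).apply_eq_iff_eq]

end CharacterTensor

/-- A right `R`-module `N` is `M`-`𝒜`-flat if and only if its character module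
`N⁺ = Hom_ℤ(N, ℚ/ℤ)` is an `M`-`𝒜`-injective left `R`-module. -/
theorem stmt3 (R : Type u) [Ring R] (M : Type u) [AddCommGroup M] [Module R M]
    (𝒜 : Set (Submodule R M)) (N : Type u) [AddCommGroup N] [Module Rᵐᵒᵖ N] :
    MAFlat R M 𝒜 N ↔ MAInjective R M 𝒜 (CharacterModule N) :=
  forall₂_congr fun A _ => ncMap_injective_iff_comp_surjective A.subtype
end

section
/- Let R be a commutative ring and S a simple R-module. Then Tor₁^R(S, M/A) = 0 for every A ∈ 𝒜 if and only if Ext¹_R(M/A, S) = 0 for every A ∈ 𝒜; that is, S is strongly M-𝒜-flat if and only if S is strongly M-𝒜-injective. -/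
/-!
Write the simple module as a residue field `k = R ⧸ m`. Compute `Tor₁(k, N)` and `Ext¹(N, k)`
from one projective resolution `P` of `N`: by base change, `Hom_R(P, k) ≅ Hom_k(k ⊗ P, k)` is the
`k`-linear dual of the complex `k ⊗ P` computing `Tor`, and over a field a complex is exact at a
spot iff its dual is, because `dualAnnihilator` is injective on subspaces.
-/

open CategoryTheory Limits

universe u

theorem LinearMap.exact_dualMap_iff {K V₁ V₂ V₃ : Type*} [Field K]
    [AddCommGroup V₁] [AddCommGroup V₂] [AddCommGroup V₃] [Module K V₁] [Module K V₂]
    [Module K V₃] (f : V₁ →ₗ[K] V₂) (g : V₂ →ₗ[K] V₃) :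
    Function.Exact g.dualMap f.dualMap ↔ Function.Exact f g := by
  rw [LinearMap.exact_iff, LinearMap.exact_iff, LinearMap.ker_dualMap_eq_dualAnnihilator_range,
    LinearMap.range_dualMap_eq_dualAnnihilator_ker, eq_comm, Subspace.dualAnnihilator_inj]

theorem LinearMap.dualMap_baseChange_comp_liftBaseChangeEquiv {R A P₁ P₂ : Type*} [CommRing R]
    [CommRing A] [Algebra R A] [AddCommGroup P₁] [AddCommGroup P₂] [Module R P₁] [Module R P₂]
    (f : P₁ →ₗ[R] P₂) :
    (f.baseChange A).dualMap ∘ₗ (LinearMap.liftBaseChangeEquiv A).toLinearMap =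
      (LinearMap.liftBaseChangeEquiv A).toLinearMap ∘ₗ LinearMap.lcomp A A f := by
  ext
  simp

theorem LinearMap.exact_lcomp_iff_exact_lTensor {R K P₁ P₂ P₃ : Type*} [CommRing R]
    [Field K] [Algebra R K] [AddCommGroup P₁] [AddCommGroup P₂] [AddCommGroup P₃]
    [Module R P₁] [Module R P₂] [Module R P₃] (f : P₁ →ₗ[R] P₂) (g : P₂ →ₗ[R] P₃) :
    Function.Exact (LinearMap.lcomp R K g) (LinearMap.lcomp R K f) ↔
      Function.Exact (f.lTensor K) (g.lTensor K) := by
  rw [← LinearMap.baseChange_eq_ltensor, ← LinearMap.baseChange_eq_ltensor,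
    ← LinearMap.exact_dualMap_iff (f.baseChange K)]
  exact (Function.Exact.iff_of_ladder_linearEquiv
    (LinearMap.dualMap_baseChange_comp_liftBaseChangeEquiv g)
    (LinearMap.dualMap_baseChange_comp_liftBaseChangeEquiv f)).symm

namespace CategoryTheory.ProjectiveResolution

variable {R : Type u} [CommRing R] {N : ModuleCat.{u} R} (P : ProjectiveResolution N)

theorem isZero_tor_one_iff (T : ModuleCat.{u} R) :
    IsZero (((Tor (ModuleCat.{u} R) 1).obj T).obj N) ↔
      Function.Exact ((P.complex.d 2 1).hom.lTensor T) ((P.complex.d 1 0).hom.lTensor T) := by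
  refine (P.isoLeftDerivedObj ((MonoidalCategory.tensoringLeft _).obj T) 1).isZero_iff.trans ?_
  rw [HomologicalComplex.homologyFunctor_obj, ← HomologicalComplex.exactAt_iff_isZero_homology,
    HomologicalComplex.exactAt_iff' _ 2 1 0 (by simp) (by simp),
    ShortComplex.ShortExact.moduleCat_exact_iff_function_exact]
  rfl

theorem isZero_ext_one_iff (Y : ModuleCat.{u} R) :
    IsZero (((Ext R (ModuleCat.{u} R) 1).obj (Opposite.op N)).obj Y) ↔
      Function.Exact (LinearMap.lcomp R Y (P.complex.d 1 0).hom)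
        (LinearMap.lcomp R Y (P.complex.d 2 1).hom) := by
  rw [(P.isoExt 1 Y).isZero_iff, ← HomologicalComplex.exactAt_iff_isZero_homology,
    HomologicalComplex.exactAt_iff' _ 0 1 2 (by simp) (by simp),
    ShortComplex.ShortExact.moduleCat_exact_iff_function_exact]
  refine (Function.Exact.iff_of_ladder_addEquiv ModuleCat.homAddEquiv ModuleCat.homAddEquiv
    ModuleCat.homAddEquiv (f₁₂ := ((P.complex.linearYonedaObj R Y).d 0 1).hom.toAddMonoidHom)
    (f₂₃ := ((P.complex.linearYonedaObj R Y).d 1 2).hom.toAddMonoidHom)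
    (g₁₂ := (LinearMap.lcomp R Y (P.complex.d 1 0).hom).toAddMonoidHom)
    (g₂₃ := (LinearMap.lcomp R Y (P.complex.d 2 1).hom).toAddMonoidHom) ?_ ?_).symm <;> rfl

end CategoryTheory.ProjectiveResolution

theorem isZero_tor_one_iff_isZero_ext_one {R : Type u} [CommRing R] (K : Type u) [Field K]
    [Algebra R K] (N : ModuleCat.{u} R) :
    IsZero (((Tor (ModuleCat.{u} R) 1).obj (ModuleCat.of R K)).obj N) ↔
      IsZero (((Ext R (ModuleCat.{u} R) 1).obj (Opposite.op N)).obj (ModuleCat.of R K)) := by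
  obtain ⟨P⟩ : Nonempty (ProjectiveResolution N) := HasProjectiveResolution.out
  rw [P.isZero_tor_one_iff, P.isZero_ext_one_iff, LinearMap.exact_lcomp_iff_exact_lTensor]

theorem isZero_tor_one_iff_isZero_ext_one_of_isSimpleModule {R : Type u} [CommRing R]
    (S : Type u) [AddCommGroup S] [Module R S] [IsSimpleModule R S] (N : ModuleCat.{u} R) :
    IsZero (((Tor (ModuleCat.{u} R) 1).obj (ModuleCat.of R S)).obj N) ↔
      IsZero (((Ext R (ModuleCat.{u} R) 1).obj (Opposite.op N)).obj (ModuleCat.of R S)) := by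
  obtain ⟨m, _, ⟨e⟩⟩ := isSimpleModule_iff_quot_maximal.mp ‹IsSimpleModule R S›
  let := Ideal.Quotient.field m
  rw [(((Tor _ 1).mapIso e.toModuleIso).app N).isZero_iff,
    (((Ext R _ 1).obj (Opposite.op N)).mapIso e.toModuleIso).isZero_iff]
  exact isZero_tor_one_iff_isZero_ext_one (R ⧸ m) N

/-- Let `R` be a commutative ring and `S` a simple `R`-module. Then `Tor₁^R(S, M/A) = 0` for
every `A ∈ 𝒜` if and only if `Ext¹_R(M/A, S) = 0` for every `A ∈ 𝒜`; that is, `S` is strongly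
`M`-`𝒜`-flat if and only if `S` is strongly `M`-`𝒜`-injective. -/
theorem stmt8 (R : Type u) [CommRing R] (M : Type u) [AddCommGroup M] [Module R M]
    (𝒜 : Set (Submodule R M)) (S : Type u) [AddCommGroup S] [Module R S]
    [IsSimpleModule R S] :
    (∀ A ∈ 𝒜, Limits.IsZero (((Tor (ModuleCat.{u} R) 1).obj
        (ModuleCat.of R S)).obj (ModuleCat.of R (M ⧸ A)))) ↔
      (∀ A ∈ 𝒜, Limits.IsZero (((Ext R (ModuleCat.{u} R) 1).obj
        (Opposite.op (ModuleCat.of R (M ⧸ A)))).obj (ModuleCat.of R S))) :=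
  forall₂_congr fun _ _ => isZero_tor_one_iff_isZero_ext_one_of_isSimpleModule S _
end
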